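/- An Eulerian graph with exactly one vertex of degree 6 and all other vertices of degree 2 is not doubly Eulerian. -/

import Mathlib

open SimpleGraph

/-- Two closed walks from the same vertex are *avoiding* if at every intermediate
step their current vertices are distinct and non-adjacent. -/
def Avoiding {V : Type*} (G : SimpleGraph V) {u : V} (p q : G.Walk u u) : Prop :=
  ∀ i : ℕ, 0 < i → i < p.length →
    p.getVert i ≠ q.getVert i ∧ ¬ G.Adj (p.getVert i) (q.getVert i)

/-- A graph is *doubly Eulerian* if from every vertex there exist two avoiding
Eulerian circuits. -/
def DoublyEulerian {V : Type*} [DecidableEq V] (G : SimpleGraph V) : Prop :=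
  ∀ u : V, ∃ p q : G.Walk u u, p.IsEulerian ∧ q.IsEulerian ∧ Avoiding G p q

/-!
Let `p` be an Eulerian circuit from `x` and `x = p₀, p₁, …, pₐ = x` its segment up to the first
return to `x`, so that all inner vertices have degree 2. Two avoiding circuits from the midpoint
`pₛ`, `s = ⌈a/2⌉`, take different first steps, hence go to `pₛ₊₁` and `pₛ₋₁`, and the degree-2
vertices force them to keep following `p` in opposite directions. After `a - s` steps one is at
`pₐ = x` and the other at `p₂ₛ₋ₐ`, which is `x` or its neighbour `p₁`.
-/

namespace SimpleGraph

variable {V : Type*} {G : SimpleGraph V}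

theorem eq_or_eq_of_degree_eq_two {c a b z : V} [Fintype (G.neighborSet c)]
    (hc : G.degree c = 2) (hab : a ≠ b) (ha : G.Adj c a) (hb : G.Adj c b) (hz : G.Adj c z) :
    z = a ∨ z = b := by
  classical
  have hsub : {a, b} ⊆ G.neighborFinset c := by simp [Finset.insert_subset_iff, ha, hb]
  have hcard : (G.neighborFinset c).card ≤ ({a, b} : Finset V).card := by
    rw [Finset.card_pair hab, card_neighborFinset_eq_degree, hc]
  have hz' : z ∈ G.neighborFinset c := by simpa using hz
  simpa [← Finset.eq_of_subset_of_card_le hsub hcard] using hz'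

namespace Walk

variable {u v w : V}

theorem IsTrail.getVert_two_ne {p : G.Walk u v} (hp : p.IsTrail) (h : 2 ≤ p.length) :
    p.getVert 2 ≠ u := by
  rcases p with _ | ⟨h₁, _ | ⟨h₂, q⟩⟩
  · simp at h
  · simp at h
  · intro h
    simp only [getVert_cons_succ, getVert_zero] at h
    subst h
    simp [Sym2.eq_swap] at hp

theorem IsTrail.getVert_add_two_ne {p : G.Walk u v} (hp : p.IsTrail) {i : ℕ}
    (hi : i + 2 ≤ p.length) : p.getVert (i + 2) ≠ p.getVert i := by
  simpa using (isTrail_of_isSubwalk (p.isSubwalk_drop i) hp).getVert_two_ne (by simp; omega)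

theorem IsEulerian.length_eq_card_edgeFinset [DecidableEq V] [Fintype G.edgeSet] {p : G.Walk u v}
    (hp : p.IsEulerian) : p.length = G.edgeFinset.card := by
  rw [← hp.edgesFinset_eq]
  exact p.length_edges.symm

theorem IsTrail.getVert_eq_of_degree_eq_two [G.LocallyFinite] {p : G.Walk u v} {q : G.Walk u w}
    (hp : p.IsTrail) (hq : q.IsTrail) {n : ℕ} (hnp : n ≤ p.length) (hnq : n ≤ q.length)
    (h₁ : p.getVert 1 = q.getVert 1) (hdeg : ∀ i, 0 < i → i < n → G.degree (p.getVert i) = 2) :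
    ∀ i ≤ n, p.getVert i = q.getVert i := by
  intro i
  induction i using Nat.twoStepInduction with
  | zero => simp
  | one => exact fun _ ↦ h₁
  | more k ih₀ ih₁ =>
    intro hk
    have hc := hdeg (k + 1) (by omega) (by omega)
    have hback := hp.getVert_add_two_ne (i := k) (by omega)
    have hprev : G.Adj (p.getVert (k + 1)) (p.getVert k) := (p.adj_getVert_succ (by omega)).symm
    have hnext : G.Adj (p.getVert (k + 1)) (p.getVert (k + 2)) := p.adj_getVert_succ (by omega)
    have hq' : G.Adj (p.getVert (k + 1)) (q.getVert (k + 2)) := by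
      rw [ih₁ (by omega)]; exact q.adj_getVert_succ (by omega)
    rcases eq_or_eq_of_degree_eq_two hc (Ne.symm hback) hprev hnext hq' with h | h
    · exact absurd (h.trans (ih₀ (by omega))) (hq.getVert_add_two_ne (by omega))
    · exact h.symm

theorem IsTrail.getVert_forward_of_degree_eq_two [G.LocallyFinite] {p : G.Walk v w}
    (hp : p.IsTrail) {s n : ℕ} (hsn : s + n ≤ p.length)
    (hdeg : ∀ i, s < i → i < s + n → G.degree (p.getVert i) = 2)
    {q : G.Walk (p.getVert s) u} (hq : q.IsTrail) (hnq : n ≤ q.length)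
    (h₁ : q.getVert 1 = p.getVert (s + 1)) : q.getVert n = p.getVert (s + n) := by
  have hdrop := isTrail_of_isSubwalk (p.isSubwalk_drop s) hp
  rw [← drop_getVert, hdrop.getVert_eq_of_degree_eq_two hq (by simp; omega) hnq
    (by rw [drop_getVert, h₁])
    (fun i hi hin ↦ by rw [drop_getVert]; exact hdeg (s + i) (by omega) (by omega)) n le_rfl]

theorem IsTrail.getVert_backward_of_degree_eq_two [G.LocallyFinite] {p : G.Walk v w}
    (hp : p.IsTrail) {s n : ℕ} (hsp : s ≤ p.length) (hns : n ≤ s)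
    (hdeg : ∀ i, s - n < i → i < s → G.degree (p.getVert i) = 2)
    {q : G.Walk (p.getVert s) u} (hq : q.IsTrail) (hnq : n ≤ q.length)
    (h₁ : q.getVert 1 = p.getVert (s - 1)) : q.getVert n = p.getVert (s - n) := by
  have hget : ∀ i ≤ s, (p.take s).reverse.getVert i = p.getVert (s - i) := by
    intro i hi
    rw [getVert_reverse, take_getVert, take_length, show s ⊓ p.length = s by omega]
    congr 1; omega
  have htake := (isTrail_of_isSubwalk (p.isSubwalk_take s) hp).reverse
  rcases Nat.eq_zero_or_pos n with rfl | hn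
  · simp
  rw [← hget n hns, htake.getVert_eq_of_degree_eq_two hq (by simp; omega) hnq
    (by rw [hget 1 (by omega), h₁])
    (fun i hi hin ↦ by rw [hget i (by omega)]; exact hdeg (s - i) (by omega) (by omega)) n le_rfl]

theorem IsTrail.eq_getVert_succ_or_pred {p : G.Walk v w} (hp : p.IsTrail) {s : ℕ} (hs : 0 < s)
    (hsp : s < p.length) [Fintype (G.neighborSet (p.getVert s))]
    (hdeg : G.degree (p.getVert s) = 2) {z : V} (hz : G.Adj (p.getVert s) z) :
    z = p.getVert (s + 1) ∨ z = p.getVert (s - 1) := by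
  have hback := hp.getVert_add_two_ne (i := s - 1) (by omega)
  rw [show s - 1 + 2 = s + 1 by omega] at hback
  have hprev := p.adj_getVert_succ (i := s - 1) (by omega)
  rw [show s - 1 + 1 = s by omega] at hprev
  exact eq_or_eq_of_degree_eq_two hdeg hback (p.adj_getVert_succ hsp) hprev.symm hz

theorem IsTrail.not_avoiding_at_midpoint [G.LocallyFinite] {p : G.Walk v w} (hp : p.IsTrail)
    {a : ℕ} (ha : 0 < a) (hap : a ≤ p.length) (hpa : p.getVert a = v)
    (hdeg : ∀ i, 0 < i → i < a → G.degree (p.getVert i) = 2)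
    {s : ℕ} (has : a ≤ 2 * s) (hsa : 2 * s ≤ a + 1)
    {q r : G.Walk (p.getVert s) (p.getVert s)}
    (hq : q.IsTrail) (hr : r.IsTrail) (hqa : a ≤ q.length) (hra : a ≤ r.length) :
    ¬ Avoiding G q r := by
  have ha₁ : a ≠ 1 := by
    rintro rfl
    exact (p.adj_getVert_succ (i := 0) hap).ne (by simp [hpa])
  have forward : ∀ q : G.Walk (p.getVert s) (p.getVert s), q.IsTrail → a ≤ q.length →
      q.getVert 1 = p.getVert (s + 1) → q.getVert (a - s) = v := fun q hq hqa h₁ ↦ by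
    rw [hp.getVert_forward_of_degree_eq_two (n := a - s) (by omega)
      (fun i hi hia ↦ hdeg i (by omega) (by omega)) hq (by omega) h₁,
      show s + (a - s) = a by omega, hpa]
  have backward : ∀ q : G.Walk (p.getVert s) (p.getVert s), q.IsTrail → a ≤ q.length →
      q.getVert 1 = p.getVert (s - 1) → q.getVert (a - s) = p.getVert (2 * s - a) :=
    fun q hq hqa h₁ ↦ by
      rw [hp.getVert_backward_of_degree_eq_two (n := a - s) (by omega) (by omega)
        (fun i hi hia ↦ hdeg i (by omega) (by omega)) hq (by omega) h₁]
      congr 1; omega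
  have first : ∀ q : G.Walk (p.getVert s) (p.getVert s), a ≤ q.length →
      q.getVert 1 = p.getVert (s + 1) ∨ q.getVert 1 = p.getVert (s - 1) := fun q hqa ↦
    hp.eq_getVert_succ_or_pred (by omega) (by omega) (hdeg s (by omega) (by omega))
      (by simpa using q.adj_getVert_succ (i := 0) (by omega))
  have hmeet : p.getVert (2 * s - a) = v ∨ G.Adj v (p.getVert (2 * s - a)) := by
    rcases (show 2 * s - a = 0 ∨ 2 * s - a = 1 by omega) with h | h <;> rw [h]
    · simp
    · exact Or.inr (by simpa using p.adj_getVert_succ (i := 0) (by omega))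
  intro hav
  have hav₁ := hav 1 one_pos (by omega)
  have havt := hav (a - s) (by omega) (by omega)
  rcases first q hqa with hq₁ | hq₁ <;> rcases first r hra with hr₁ | hr₁
  · exact hav₁.1 (hq₁.trans hr₁.symm)
  · rw [forward q hq hqa hq₁, backward r hr hra hr₁] at havt
    exact hmeet.elim (fun h ↦ havt.1 h.symm) havt.2
  · rw [backward q hq hqa hq₁, forward r hr hra hr₁] at havt
    exact hmeet.elim havt.1 (fun h ↦ havt.2 h.symm)
  · exact hav₁.1 (hq₁.trans hr₁.symm)

end Walk
end SimpleGraph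

theorem not_doublyEulerian_one_deg_six_general
    {V : Type*} [Fintype V] [DecidableEq V] (G : SimpleGraph V) [DecidableRel G.Adj]
    (x : V) (hx : G.degree x = 6)
    (hother : ∀ y : V, y ≠ x → G.degree y = 2) :
    ¬ DoublyEulerian G := by
  intro hDE
  obtain ⟨p, -, hp, -⟩ := hDE x
  obtain ⟨y, hxy⟩ := (G.degree_pos_iff_exists_adj x).1 (by omega)
  have hpos : 0 < p.length := by
    rw [← p.length_edges]
    exact List.length_pos_of_mem (hp.mem_edges_iff.2 (G.mem_edgeSet.2 hxy))
  have hret : ∃ a, 0 < a ∧ p.getVert a = x := ⟨p.length, hpos, p.getVert_length⟩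
  set a := Nat.find hret
  obtain ⟨ha, hpa⟩ : 0 < a ∧ p.getVert a = x := Nat.find_spec hret
  have hap : a ≤ p.length := Nat.find_min' hret ⟨hpos, p.getVert_length⟩
  have hdeg : ∀ i, 0 < i → i < a → G.degree (p.getVert i) = 2 :=
    fun i hi hia ↦ hother _ fun h ↦ Nat.find_min hret hia ⟨hi, h⟩
  obtain ⟨q, r, hq, hr, hav⟩ := hDE (p.getVert ((a + 1) / 2))
  have hpq := hp.length_eq_card_edgeFinset.trans hq.length_eq_card_edgeFinset.symm
  have hpr := hp.length_eq_card_edgeFinset.trans hr.length_eq_card_edgeFinset.symm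
  exact hp.isTrail.not_avoiding_at_midpoint ha hap hpa hdeg (by omega) (by omega)
    hq.isTrail hr.isTrail (by omega) (by omega) hav

/-- A connected graph with exactly one vertex of degree 6 and all other vertices
of degree 2 is not doubly Eulerian. -/
theorem not_doublyEulerian_one_deg_six
    {V : Type*} [Fintype V] [DecidableEq V] (G : SimpleGraph V) [DecidableRel G.Adj]
    (hconn : G.Connected) (x : V) (hx : G.degree x = 6)
    (hother : ∀ y : V, y ≠ x → G.degree y = 2) :
    ¬ DoublyEulerian G :=
  not_doublyEulerian_one_deg_six_general G x hx hother
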